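/- arXiv:2502.07607 — 2 statements merged into one kernel-verified Lean document; each statement's English description precedes it below -/
import Mathlib

section
/- Let K be a multiplicative valued difference field with value group Γ ⊆ ℝ and scaling exponent ρ. For Laurent difference polynomials f, g over K and any w ∈ Γ^n, trop(fg)(w) = trop(f)(w) + trop(g)(w). -/
open scoped Classical

/-- The real number `u(ρ)·w` for an exponent `e ∈ (ℤ[σ])^n`, encoded as a finitely
supported function on `Fin n × ℕ` (the coefficient of `σ^j` in the `i`-th entry being
`e (i, j)`): substituting `ρ` for `σ` and pairing with `w`. -/
noncomputable def expDot {n : ℕ} (ρ : ℝ) (e : (Fin n × ℕ) →₀ ℤ) (w : Fin n → ℝ) : ℝ :=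
  e.sum fun p m => (m : ℝ) * ρ ^ p.2 * w p.1

/-- Tropicalization of a Laurent difference polynomial `F` (coefficients indexed by
exponents), evaluated at `w`:  `min (v c_u + u(ρ)·w)` over the support (junk value `0` for
the zero polynomial). -/
noncomputable def trop {K : Type} [Field K] {n : ℕ} (v : K → ℝ) (ρ : ℝ)
    (F : ((Fin n × ℕ) →₀ ℤ) →₀ K) (w : Fin n → ℝ) : ℝ :=
  if h : F.support.Nonempty then F.support.inf' h fun e => v (F e) + expDot ρ e w else 0

section Aux

variable {K : Type} [Field K] (v : K → ℝ)
  (hmul : ∀ a b : K, a ≠ 0 → b ≠ 0 → v (a * b) = v a + v b)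
  (hadd : ∀ a b : K, a ≠ 0 → b ≠ 0 → a + b ≠ 0 → min (v a) (v b) ≤ v (a + b))

include hmul in
lemma aux_v_one : v 1 = 0 := by
  have := hmul 1 1 one_ne_zero one_ne_zero
  simp only [mul_one] at this; linarith

include hmul in
lemma aux_v_neg (y : K) (hy : y ≠ 0) : v (-y) = v y := by
  have h1 : v ((-1 : K) * -1) = v (-1) + v (-1) := hmul _ _ (by norm_num) (by norm_num)
  have h2 : v ((-1 : K) * y) = v (-1) + v y := hmul _ _ (by norm_num) hy
  simp only [neg_mul, one_mul, neg_neg] at h1 h2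
  have h0 : v (1 : K) = 0 := aux_v_one v hmul
  rw [h0] at h1
  rw [h2]; linarith

include hmul hadd in
lemma aux_key_add (x y : K) (hx : x ≠ 0) (hy : y ≠ 0) (h : v x < v y) :
    x + y ≠ 0 ∧ v (x + y) = v x := by
  have hne : x + y ≠ 0 := by
    intro h0
    have hyx : y = -x := by rw [add_comm] at h0; exact eq_neg_of_add_eq_zero_left h0
    rw [hyx, aux_v_neg v hmul x hx] at h
    exact absurd h.le (not_le.mpr h)
  refine ⟨hne, ?_⟩
  have h1 : min (v x) (v y) ≤ v (x + y) := hadd x y hx hy hne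
  have h3 : min (v (x + y)) (v (-y)) ≤ v ((x + y) + -y) :=
    hadd _ _ hne (neg_ne_zero.mpr hy) (by rw [add_neg_cancel_right]; exact hx)
  rw [add_neg_cancel_right, aux_v_neg v hmul y hy] at h3
  rw [min_eq_left h.le] at h1
  rcases min_le_iff.mp h3 with h4 | h4
  · linarith
  · linarith

include hadd in
lemma aux_sum_ge {ι : Type*} (s : Finset ι) (f : ι → K) (c : ℝ)
    (h : ∀ i ∈ s, f i ≠ 0 → c ≤ v (f i)) (hs : ∑ i ∈ s, f i ≠ 0) :
    c ≤ v (∑ i ∈ s, f i) := by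
  induction s using Finset.cons_induction with
  | empty => simp at hs
  | cons a t ha ih =>
    rw [Finset.sum_cons] at hs ⊢
    by_cases hfa : f a = 0
    · rw [hfa, zero_add] at hs ⊢
      exact ih (fun i hi => h i (Finset.mem_cons_of_mem hi)) hs
    · by_cases ht : ∑ i ∈ t, f i = 0
      · rw [ht, add_zero] at hs ⊢
        exact h a (Finset.mem_cons_self a t) hfa
      · have h1 := hadd _ _ hfa ht hs
        have h2 := h a (Finset.mem_cons_self a t) hfa
        have h3 := ih (fun i hi => h i (Finset.mem_cons_of_mem hi)) ht
        exact le_trans (le_min h2 h3) h1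

include hadd in
lemma aux_sum_gt {ι : Type*} (s : Finset ι) (f : ι → K) (c : ℝ)
    (h : ∀ i ∈ s, f i ≠ 0 → c < v (f i)) (hs : ∑ i ∈ s, f i ≠ 0) :
    c < v (∑ i ∈ s, f i) := by
  induction s using Finset.cons_induction with
  | empty => simp at hs
  | cons a t ha ih =>
    rw [Finset.sum_cons] at hs ⊢
    by_cases hfa : f a = 0
    · rw [hfa, zero_add] at hs ⊢
      exact ih (fun i hi => h i (Finset.mem_cons_of_mem hi)) hs
    · by_cases ht : ∑ i ∈ t, f i = 0
      · rw [ht, add_zero] at hs ⊢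
        exact h a (Finset.mem_cons_self a t) hfa
      · have h1 := hadd _ _ hfa ht hs
        have h2 := h a (Finset.mem_cons_self a t) hfa
        have h3 := ih (fun i hi => h i (Finset.mem_cons_of_mem hi)) ht
        exact lt_of_lt_of_le (lt_min h2 h3) h1

include hmul hadd in
lemma aux_sum_eq {ι : Type*} (s : Finset ι) (f : ι → K) (m : ι) (hm : m ∈ s)
    (hm0 : f m ≠ 0) (h : ∀ i ∈ s, i ≠ m → f i ≠ 0 → v (f m) < v (f i)) :
    (∑ i ∈ s, f i) ≠ 0 ∧ v (∑ i ∈ s, f i) = v (f m) := by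
  rw [← Finset.add_sum_erase s f hm]
  by_cases hr : ∑ i ∈ s.erase m, f i = 0
  · rw [hr, add_zero]; exact ⟨hm0, rfl⟩
  · have hgt : v (f m) < v (∑ i ∈ s.erase m, f i) := by
      refine aux_sum_gt v hadd _ f _ (fun i hi hfi => ?_) hr
      exact h i (Finset.mem_of_mem_erase hi) (Finset.ne_of_mem_erase hi) hfi
    exact aux_key_add v hmul hadd _ _ hm0 hr hgt

end Aux

lemma expDot_add {n : ℕ} (ρ : ℝ) (a b : (Fin n × ℕ) →₀ ℤ) (w : Fin n → ℝ) :
    expDot ρ (a + b) w = expDot ρ a w + expDot ρ b w := by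
  unfold expDot
  apply Finsupp.sum_add_index' (fun p => by simp) (fun p m₁ m₂ => by push_cast; ring)

/-- Let `K` be a multiplicative valued difference field with value group
`Γ ⊆ ℝ` and scaling exponent `ρ`.  For Laurent difference polynomials `f, g` over `K` and
any `w ∈ Γ^n`, `trop (fg) w = trop f w + trop g w`. -/
theorem trop_mul
    {K : Type} [Field K] {n : ℕ} (v : K → ℝ) (σ : K ≃+* K) (ρ : ℝ) (Γ : AddSubgroup ℝ)
    (hρ : 0 < ρ)
    (hΓ : ∀ x : K, x ≠ 0 → v x ∈ Γ)
    (hmul : ∀ a b : K, a ≠ 0 → b ≠ 0 → v (a * b) = v a + v b)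
    (hadd : ∀ a b : K, a ≠ 0 → b ≠ 0 → a + b ≠ 0 → min (v a) (v b) ≤ v (a + b))
    (hσv : ∀ x : K, x ≠ 0 → v (σ x) = ρ * v x)
    (F G : AddMonoidAlgebra K ((Fin n × ℕ) →₀ ℤ)) (hF : F ≠ 0) (hG : G ≠ 0)
    (w : Fin n → ℝ) (hw : ∀ i, w i ∈ Γ) :
    trop v ρ (F * G).coeff w = trop v ρ F.coeff w + trop v ρ G.coeff w := by
  classical
  set ψ : ((Fin n × ℕ) →₀ ℤ) → Lex ((Lex (Fin n × ℕ)) →₀ ℤ) :=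
    fun e => toLex (Finsupp.domCongr (M := ℤ) (toLex (α := Fin n × ℕ)) e) with hψ
  have hψadd : ∀ a b : ((Fin n × ℕ) →₀ ℤ), ψ (a + b) = ψ a + ψ b := by
    intro a b
    simp only [hψ, map_add]
    rfl
  have hψinj : Function.Injective ψ := by
    intro a b hab
    simp only [hψ] at hab
    exact (Finsupp.domCongr (M := ℤ) (toLex (α := Fin n × ℕ))).injective
      (toLex.injective hab)
  have hFs : F.coeff.support.Nonempty := Finsupp.support_nonempty_iff.mpr (AddMonoidAlgebra.coeff_eq_zero.not.mpr hF)
  have hGs : G.coeff.support.Nonempty := Finsupp.support_nonempty_iff.mpr (AddMonoidAlgebra.coeff_eq_zero.not.mpr hG)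
  have hFG : F * G ≠ 0 := mul_ne_zero hF hG
  have hFGs : (F * G).coeff.support.Nonempty := Finsupp.support_nonempty_iff.mpr (AddMonoidAlgebra.coeff_eq_zero.not.mpr hFG)
  set TF : ((Fin n × ℕ) →₀ ℤ) → ℝ := fun e => v (F.coeff e) + expDot ρ e w with hTF
  set TG : ((Fin n × ℕ) →₀ ℤ) → ℝ := fun e => v (G.coeff e) + expDot ρ e w with hTG
  have htropF : trop v ρ F.coeff w = F.coeff.support.inf' hFs TF := by rw [trop, dif_pos hFs]
  have htropG : trop v ρ G.coeff w = G.coeff.support.inf' hGs TG := by rw [trop, dif_pos hGs]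
  have htropFG : trop v ρ (F * G).coeff w =
      (F * G).coeff.support.inf' hFGs (fun e => v ((F * G).coeff e) + expDot ρ e w) := by
    rw [trop, dif_pos hFGs]
  -- coefficients of F * G
  have hmulap : ∀ x : ((Fin n × ℕ) →₀ ℤ), (F * G).coeff x =
      ∑ p ∈ (F.coeff.support ×ˢ G.coeff.support).filter (fun p => p.1 + p.2 = x),
        F.coeff p.1 * G.coeff p.2 := by
    intro x
    rw [AddMonoidAlgebra.coeff_mul]
    simp only [Finsupp.sum]
    rw [← Finset.sum_product', Finset.sum_filter]
  have hFle : ∀ a ∈ F.coeff.support, trop v ρ F.coeff w ≤ TF a := by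
    intro a ha; rw [htropF]; exact Finset.inf'_le _ ha
  have hGle : ∀ b ∈ G.coeff.support, trop v ρ G.coeff w ≤ TG b := by
    intro b hb; rw [htropG]; exact Finset.inf'_le _ hb
  -- each product term is bounded below
  have hterm : ∀ (x : ((Fin n × ℕ) →₀ ℤ)) (p : ((Fin n × ℕ) →₀ ℤ) × ((Fin n × ℕ) →₀ ℤ)), p.1 ∈ F.coeff.support → p.2 ∈ G.coeff.support →
      p.1 + p.2 = x →
      trop v ρ F.coeff w + trop v ρ G.coeff w - expDot ρ x w ≤ v (F.coeff p.1 * G.coeff p.2) := by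
    intro x p hp1 hp2 hpe
    have hF1 : F.coeff p.1 ≠ 0 := Finsupp.mem_support_iff.mp hp1
    have hG2 : G.coeff p.2 ≠ 0 := Finsupp.mem_support_iff.mp hp2
    have h1 := hFle p.1 hp1
    have h2 := hGle p.2 hp2
    have hde : expDot ρ p.1 w + expDot ρ p.2 w = expDot ρ x w := by
      rw [← expDot_add, hpe]
    rw [hmul _ _ hF1 hG2]
    simp only [hTF, hTG] at h1 h2
    linarith
  -- lower bound for trop (F * G)
  have hlow : trop v ρ F.coeff w + trop v ρ G.coeff w ≤ trop v ρ (F * G).coeff w := by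
    rw [htropFG]
    apply Finset.le_inf'
    intro e he
    have hne : (F * G).coeff e ≠ 0 := Finsupp.mem_support_iff.mp he
    have hge : trop v ρ F.coeff w + trop v ρ G.coeff w - expDot ρ e w ≤ v ((F * G).coeff e) := by
      rw [hmulap e] at hne ⊢
      refine aux_sum_ge v hadd _ _ _ (fun p hp _ => ?_) hne
      rw [Finset.mem_filter, Finset.mem_product] at hp
      exact hterm e p hp.1.1 hp.1.2 hp.2
    linarith
  -- choose extremal minimizers
  set SF : Finset ((Fin n × ℕ) →₀ ℤ) := F.coeff.support.filter (fun e => TF e = trop v ρ F.coeff w) with hSF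
  set SG : Finset ((Fin n × ℕ) →₀ ℤ) := G.coeff.support.filter (fun e => TG e = trop v ρ G.coeff w) with hSG
  have hSFne : SF.Nonempty := by
    obtain ⟨e, he, heq⟩ := Finset.exists_mem_eq_inf' hFs TF
    exact ⟨e, Finset.mem_filter.mpr ⟨he, by rw [htropF, heq]⟩⟩
  have hSGne : SG.Nonempty := by
    obtain ⟨e, he, heq⟩ := Finset.exists_mem_eq_inf' hGs TG
    exact ⟨e, Finset.mem_filter.mpr ⟨he, by rw [htropG, heq]⟩⟩
  obtain ⟨e₁, he₁, he₁max⟩ := SF.exists_max_image (fun e => ψ e) hSFne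
  obtain ⟨e₂, he₂, he₂max⟩ := SG.exists_max_image (fun e => ψ e) hSGne
  obtain ⟨he₁F, he₁eq⟩ := Finset.mem_filter.mp he₁
  obtain ⟨he₂G, he₂eq⟩ := Finset.mem_filter.mp he₂
  have hF1 : F.coeff e₁ ≠ 0 := Finsupp.mem_support_iff.mp he₁F
  have hG2 : G.coeff e₂ ≠ 0 := Finsupp.mem_support_iff.mp he₂G
  -- the term at (e₁, e₂) is strictly minimal among terms for exponent e₁ + e₂
  have hstrict : ∀ p ∈ (F.coeff.support ×ˢ G.coeff.support).filter
      (fun p => p.1 + p.2 = e₁ + e₂), p ≠ (e₁, e₂) → F.coeff p.1 * G.coeff p.2 ≠ 0 →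
      v (F.coeff e₁ * G.coeff e₂) < v (F.coeff p.1 * G.coeff p.2) := by
    intro p hp hpne _
    rw [Finset.mem_filter, Finset.mem_product] at hp
    obtain ⟨⟨hp1, hp2⟩, hpe⟩ := hp
    have hFp1 : F.coeff p.1 ≠ 0 := Finsupp.mem_support_iff.mp hp1
    have hGp2 : G.coeff p.2 ≠ 0 := Finsupp.mem_support_iff.mp hp2
    rw [hmul _ _ hF1 hG2, hmul _ _ hFp1 hGp2]
    by_contra hcon
    push_neg at hcon
    have h1 := hFle p.1 hp1
    have h2 := hGle p.2 hp2
    have hde : expDot ρ p.1 w + expDot ρ p.2 w = expDot ρ e₁ w + expDot ρ e₂ w := by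
      rw [← expDot_add, ← expDot_add, hpe]
    simp only [hTF, hTG] at h1 h2 he₁eq he₂eq
    have heq1 : v (F.coeff p.1) + expDot ρ p.1 w = trop v ρ F.coeff w := by linarith
    have heq2 : v (G.coeff p.2) + expDot ρ p.2 w = trop v ρ G.coeff w := by linarith
    have hp1S : p.1 ∈ SF := Finset.mem_filter.mpr ⟨hp1, heq1⟩
    have hp2S : p.2 ∈ SG := Finset.mem_filter.mpr ⟨hp2, heq2⟩
    have hle1 : ψ p.1 ≤ ψ e₁ := he₁max p.1 hp1S
    have hle2 : ψ p.2 ≤ ψ e₂ := he₂max p.2 hp2S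
    have hpeq1 : p.1 = e₁ := by
      by_contra hne1
      have hlt : ψ p.1 < ψ e₁ := lt_of_le_of_ne hle1 (fun hc => hne1 (hψinj hc))
      have hc2 : ψ p.1 + ψ p.2 < ψ e₁ + ψ e₂ := add_lt_add_of_lt_of_le hlt hle2
      rw [← hψadd, ← hψadd, hpe] at hc2
      exact lt_irrefl _ hc2
    have hpeq2 : p.2 = e₂ := by
      have := hpe
      rw [hpeq1] at this
      exact add_left_cancel this
    exact hpne (Prod.ext hpeq1 hpeq2)
  -- the coefficient of F * G at e₁ + e₂
  have hmem : (e₁, e₂) ∈ (F.coeff.support ×ˢ G.coeff.support).filter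
      (fun p => p.1 + p.2 = e₁ + e₂) :=
    Finset.mem_filter.mpr ⟨Finset.mem_product.mpr ⟨he₁F, he₂G⟩, rfl⟩
  have hcoef := aux_sum_eq v hmul hadd _ (fun p => F.coeff p.1 * G.coeff p.2) (e₁, e₂) hmem
    (mul_ne_zero hF1 hG2) hstrict
  rw [← hmulap (e₁ + e₂)] at hcoef
  have hmemsupp : e₁ + e₂ ∈ (F * G).coeff.support := Finsupp.mem_support_iff.mpr hcoef.1
  have hub : trop v ρ (F * G).coeff w ≤ trop v ρ F.coeff w + trop v ρ G.coeff w := by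
    rw [htropFG]
    have := Finset.inf'_le (fun e => v ((F * G).coeff e) + expDot ρ e w) hmemsupp
    refine le_trans this ?_
    show v ((F * G).coeff (e₁ + e₂)) + expDot ρ (e₁ + e₂) w ≤ trop v ρ F.coeff w + trop v ρ G.coeff w
    rw [hcoef.2, hmul _ _ hF1 hG2, expDot_add]
    simp only [hTF, hTG] at he₁eq he₂eq
    linarith
  linarith
end

section
/- Let f ∈ K_σ[x_1^{±1},…,x_n^{±1}] be a Laurent difference polynomial. For each sufficiently large natural number l, the monomial substitution φ*_l defined by x_i ↦ x_i·x_n^{l^i} for 1 ≤ i ≤ n−1 and x_n ↦ x_n maps f to a Laurent difference polynomial g = φ*_l(f) in which distinct monomials of f are sent to monomials with pairwise distinct σ-exponents of x_n. -/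
open Filter Polynomial

lemma key_pair {n : ℕ} (e e' : (Fin (n + 1) × ℕ) →₀ ℤ) (hne : e ≠ e') :
    ∀ᶠ l : ℕ in atTop,
      (fun j : ℕ => e (Fin.last n, j) +
          ∑ i : Fin n, (l : ℤ) ^ ((i : ℕ) + 1) * e (i.castSucc, j)) ≠
      (fun j : ℕ => e' (Fin.last n, j) +
          ∑ i : Fin n, (l : ℤ) ^ ((i : ℕ) + 1) * e' (i.castSucc, j)) := by
  obtain ⟨⟨i', j⟩, hij⟩ : ∃ q, e q ≠ e' q := by
    by_contra h; push_neg at h; exact hne (Finsupp.ext fun q => h q)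
  set p : Polynomial ℤ := C (e (Fin.last n, j) - e' (Fin.last n, j)) +
      ∑ i : Fin n, C (e (i.castSucc, j) - e' (i.castSucc, j)) * X ^ ((i : ℕ) + 1) with hp_def
  have hcoeff0 : p.coeff 0 = e (Fin.last n, j) - e' (Fin.last n, j) := by
    simp [hp_def, coeff_zero_eq_eval_zero, eval_finset_sum]
  have hcoeffk : ∀ k : Fin n,
      p.coeff ((k : ℕ) + 1) = e (k.castSucc, j) - e' (k.castSucc, j) := by
    intro k
    rw [hp_def, coeff_add, coeff_C, if_neg (by omega), finset_sum_coeff]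
    rw [Finset.sum_eq_single k]
    · rw [coeff_C_mul, coeff_X_pow, if_pos rfl, mul_one, zero_add]
    · intro i _ hik
      rw [coeff_C_mul, coeff_X_pow, if_neg (by
        simp only [Nat.add_right_cancel_iff]
        exact fun h => hik (Fin.ext h.symm)), mul_zero]
    · simp
  have hp : p ≠ 0 := by
    rcases Fin.eq_castSucc_or_eq_last i' with ⟨i, rfl⟩ | rfl
    · intro h; apply hij; have := hcoeffk i; rw [h, coeff_zero] at this; omega
    · intro h; apply hij; rw [h, coeff_zero] at hcoeff0; omega
  have hfin : {x : ℤ | p.IsRoot x}.Finite := Polynomial.finite_setOf_isRoot hp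
  have hfin2 : {l : ℕ | p.eval (l : ℤ) = 0}.Finite := by
    have : {l : ℕ | p.eval (l : ℤ) = 0} = (Nat.cast : ℕ → ℤ) ⁻¹' {x : ℤ | p.IsRoot x} := rfl
    rw [this]
    exact hfin.preimage ((Nat.cast_injective (R := ℤ)).injOn)
  have hev : ∀ᶠ l : ℕ in atTop, ¬ (p.eval (l : ℤ) = 0) := by
    rw [← Nat.cofinite_eq_atTop]
    exact Set.Finite.eventually_cofinite_notMem hfin2
  filter_upwards [hev] with l hl
  intro heq
  apply hl
  have h' := congrFun heq j
  simp only [hp_def, eval_add, eval_C, eval_finset_sum, eval_mul, eval_pow, eval_X]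
  have : ∑ i : Fin n, (e (i.castSucc, j) - e' (i.castSucc, j)) * (l : ℤ) ^ ((i : ℕ) + 1)
      = ∑ i : Fin n, (l : ℤ) ^ ((i : ℕ) + 1) * e (i.castSucc, j)
        - ∑ i : Fin n, (l : ℤ) ^ ((i : ℕ) + 1) * e' (i.castSucc, j) := by
    rw [← Finset.sum_sub_distrib]
    exact Finset.sum_congr rfl fun i _ => by ring
  rw [this]
  linarith


/-- Let `f ∈ K_σ[x₁^{±1},…,x_{n+1}^{±1}]` be a Laurent difference polynomial
(coefficients indexed by exponents `u(σ) ∈ (ℤ[σ])^{n+1}`, encoded as finitely supported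
functions on `Fin (n+1) × ℕ`; `x_{n+1}` is the last variable).  For each sufficiently large
natural number `l`, the monomial substitution `φ*_l : x_i ↦ x_i · x_{n+1}^{l^i}`
(for `i < n+1`), `x_{n+1} ↦ x_{n+1}`, sends distinct monomials of `f` to monomials with
pairwise distinct `σ`-exponents of `x_{n+1}`, i.e. the map sending an exponent `u(σ)` to the
new `x_{n+1}`-exponent `u_{n+1}(σ) + Σ_{i=1}^{n} u_i(σ)·l^i ∈ ℤ[σ]` is injective on the
support of `f`. -/
theorem substitution_separates_exponents
    {K : Type} [Field K] {n : ℕ}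
    (F : ((Fin (n + 1) × ℕ) →₀ ℤ) →₀ K) :
    ∃ l₀ : ℕ, ∀ l : ℕ, l₀ ≤ l →
      Set.InjOn
        (fun e : (Fin (n + 1) × ℕ) →₀ ℤ =>
          (fun j : ℕ =>
            e (Fin.last n, j) +
              ∑ i : Fin n, (l : ℤ) ^ ((i : ℕ) + 1) * e (i.castSucc, j)))
        (F.support : Set ((Fin (n + 1) × ℕ) →₀ ℤ)) := by
  have all : ∀ᶠ l : ℕ in atTop,
      ∀ q ∈ F.support ×ˢ F.support, q.1 ≠ q.2 →
        (fun j : ℕ => q.1 (Fin.last n, j) +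
            ∑ i : Fin n, (l : ℤ) ^ ((i : ℕ) + 1) * q.1 (i.castSucc, j)) ≠
        (fun j : ℕ => q.2 (Fin.last n, j) +
            ∑ i : Fin n, (l : ℤ) ^ ((i : ℕ) + 1) * q.2 (i.castSucc, j)) := by
    rw [eventually_all_finset]
    intro q hq
    by_cases hqq : q.1 = q.2
    · exact Eventually.of_forall fun l h => absurd hqq h
    · exact (key_pair q.1 q.2 hqq).mono fun l h _ => h
  obtain ⟨l₀, hl₀⟩ := eventually_atTop.mp all
  refine ⟨l₀, fun l hl e he e' he' heq => ?_⟩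
  by_contra hne
  exact hl₀ l hl (e, e') (Finset.mem_product.mpr ⟨he, he'⟩) hne heq
end
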